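/- arXiv:1410.5983 — 6 statements merged into one kernel-verified Lean document; each statement's English description precedes it below -/
import Mathlib

section
/- Let ν > 1 and 0 < r₋ < r₊ be real numbers, set s := √(r₊ r₋ (ν²+3)) and R²(r) := (r/4)·[3(ν²−1)r + (ν²+3)(r₊+r₋) − 4νs]. Then R²(r) > 0 for every r ≥ r₊. -/
/-- s := √(r₊ r₋ (ν²+3)). -/
noncomputable def sBH (ν rp rm : ℝ) : ℝ := Real.sqrt (rp * rm * (ν ^ 2 + 3))

/-- R²(r) := (r/4)·[3(ν²−1)r + (ν²+3)(r₊+r₋) − 4νs]. -/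
noncomputable def R2 (ν rp rm r : ℝ) : ℝ :=
  r / 4 * (3 * (ν ^ 2 - 1) * r + (ν ^ 2 + 3) * (rp + rm) - 4 * ν * sBH ν rp rm)

/-- R²(r) > 0 for every r ≥ r₊. -/
theorem stmt2 (ν rp rm : ℝ) (hν : 1 < ν) (hrm : 0 < rm) (hr : rm < rp)
    (r : ℝ) (hrr : rp ≤ r) :
    0 < R2 ν rp rm r := by
  have hrp : 0 < rp := hrm.trans hr
  set s := sBH ν rp rm with hsdef
  have hs0 : 0 ≤ s := Real.sqrt_nonneg _
  have hs2 : s ^ 2 = rp * rm * (ν ^ 2 + 3) := by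
    rw [hsdef, sBH, sq, Real.mul_self_sqrt]
    positivity
  have h1 : 0 < 4 * ν ^ 2 * rp - (ν ^ 2 + 3) * rm := by
    nlinarith [mul_pos (show (0:ℝ) < ν ^ 2 - 1 by nlinarith) hrm,
      mul_pos (show (0:ℝ) < ν ^ 2 by positivity) (sub_pos.2 hr)]
  have hνs : 0 ≤ 4 * ν * s := by positivity
  have hA : 0 < 4 * ν ^ 2 * rp + (ν ^ 2 + 3) * rm := by nlinarith
  have hA2 : (4 * ν * s) ^ 2 < (4 * ν ^ 2 * rp + (ν ^ 2 + 3) * rm) ^ 2 := by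
    nlinarith [mul_pos h1 h1]
  have hbr : 0 < 3 * (ν ^ 2 - 1) * rp + (ν ^ 2 + 3) * (rp + rm) - 4 * ν * s := by
    nlinarith [hA2, hνs, hA]
  have hr0 : 0 < r := hrp.trans_le hrr
  have : 0 < 3 * (ν ^ 2 - 1) * r + (ν ^ 2 + 3) * (rp + rm) - 4 * ν * s := by
    nlinarith [sq_nonneg (ν - 1)]
  unfold R2
  rw [← hsdef]
  positivity
end

section
/- Let ν > 1 and 0 < r₋ < r₊ be real numbers. With s := √(r₊ r₋ (ν²+3)), R²(r) := (r/4)·[3(ν²−1)r + (ν²+3)(r₊+r₋) − 4νs], N²(r) := (ν²+3)(r−r₊)(r−r₋)/(4R²(r)) and N^θ(r) := (2νr − s)/(2R²(r)), one has −N²(r) + R²(r)·(N^θ(r))² = 1 for every r > r₊. In particular the Killing vector ∂_t, whose squared norm in the black hole metric is −N²(r) + R²(r)·(N^θ(r))², is spacelike everywhere in the exterior region r > r₊. -/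
/-- N²(r) := (ν²+3)(r−r₊)(r−r₋)/(4R²(r)). -/
noncomputable def N2 (ν rp rm r : ℝ) : ℝ :=
  (ν ^ 2 + 3) * (r - rp) * (r - rm) / (4 * R2 ν rp rm r)

/-- N^θ(r) := (2νr − s)/(2R²(r)). -/
noncomputable def Nθ (ν rp rm r : ℝ) : ℝ :=
  (2 * ν * r - sBH ν rp rm) / (2 * R2 ν rp rm r)

/-- for every r > r₊, the squared norm of the Killing vector ∂_t,
namely −N²(r) + R²(r)·(N^θ(r))², equals 1; in particular ∂_t is spacelike
everywhere in the exterior region. -/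
theorem stmt3 (ν rp rm : ℝ) (hν : 1 < ν) (hrm : 0 < rm) (hr : rm < rp)
    (r : ℝ) (hrr : rp < r) :
    -N2 ν rp rm r + R2 ν rp rm r * (Nθ ν rp rm r) ^ 2 = 1 := by
  have hrp : 0 < rp := hrm.trans hr
  have hν0 : 0 < ν := by linarith
  have hsnn : 0 ≤ sBH ν rp rm := Real.sqrt_nonneg _
  have hs2 : sBH ν rp rm ^ 2 = rp * rm * (ν ^ 2 + 3) := by
    rw [sBH, Real.sq_sqrt (by positivity)]
  have hkey : 4 * ν * sBH ν rp rm ≤ 4 * ν ^ 2 * rp + (ν ^ 2 + 3) * rm := by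
    have h1 : sBH ν rp rm ≤ (4 * ν ^ 2 * rp + (ν ^ 2 + 3) * rm) / (4 * ν) := by
      rw [sBH, Real.sqrt_le_iff]
      constructor
      · positivity
      · rw [div_pow, le_div_iff₀ (by positivity)]
        nlinarith [sq_nonneg (4 * ν ^ 2 * rp - (ν ^ 2 + 3) * rm)]
    calc 4 * ν * sBH ν rp rm ≤ 4 * ν * ((4 * ν ^ 2 * rp + (ν ^ 2 + 3) * rm) / (4 * ν)) := by
          apply mul_le_mul_of_nonneg_left h1 (by positivity)
      _ = 4 * ν ^ 2 * rp + (ν ^ 2 + 3) * rm := by field_simp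
  have hA : 0 < 3 * (ν ^ 2 - 1) * r + (ν ^ 2 + 3) * (rp + rm) - 4 * ν * sBH ν rp rm := by
    nlinarith [hkey, mul_pos (show (0:ℝ) < ν ^ 2 - 1 by nlinarith) (sub_pos.2 hrr)]
  have hR2 : 0 < R2 ν rp rm r := by
    rw [R2]
    have hrpos : 0 < r := hrp.trans hrr
    positivity
  have hR2ne : R2 ν rp rm r ≠ 0 := ne_of_gt hR2
  have hmain : R2 ν rp rm r * 4
      = (2 * ν * r - sBH ν rp rm) ^ 2 - (ν ^ 2 + 3) * (r - rp) * (r - rm) := by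
    rw [R2]
    linear_combination -hs2
  have key : -N2 ν rp rm r + R2 ν rp rm r * (Nθ ν rp rm r) ^ 2
      = ((2 * ν * r - sBH ν rp rm) ^ 2 - (ν ^ 2 + 3) * (r - rp) * (r - rm))
        / (4 * R2 ν rp rm r) := by
    rw [N2, Nθ, div_pow]
    field_simp
    ring
  rw [key, ← hmain, mul_comm, div_self (by positivity)]
end

section
/- Let ν > 1 and 0 < r₋ < r₊ be real numbers. With s := √(r₊ r₋ (ν²+3)), R²(r) := (r/4)·[3(ν²−1)r + (ν²+3)(r₊+r₋) − 4νs], N²(r) := (ν²+3)(r−r₊)(r−r₋)/(4R²(r)) and N^θ(r) := (2νr − s)/(2R²(r)): for every pair of real numbers (a,b) ≠ (0,0) there exists r > r₊ such that −a²N²(r) + R²(r)(aN^θ(r) + b)² > 0. That is, no nonzero linear combination a∂_t + b∂_θ of the Killing vector fields is timelike throughout the exterior region r > r₊. -/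
open Filter

lemma eventually_quadratic_pos {A : ℝ} (hA : 0 < A) (B C : ℝ) :
    ∀ᶠ x in atTop, 0 < A * x ^ 2 + B * x + C := by
  have hlin : Tendsto (fun x : ℝ => A * x + B) atTop atTop :=
    tendsto_atTop_add_const_right _ B (tendsto_id.const_mul_atTop hA)
  have hquad : Tendsto (fun x : ℝ => x * (A * x + B) + C) atTop atTop :=
    tendsto_atTop_add_const_right _ C (tendsto_id.atTop_mul_atTop₀ hlin)
  filter_upwards [hquad.eventually_gt_atTop 0] with x hx
  linarith

section BlackHole

variable {ν rp rm : ℝ}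

lemma four_mul_R2_eq (hp : 0 ≤ rp * rm * (ν ^ 2 + 3)) (r : ℝ) :
    4 * R2 ν rp rm r
      = (2 * ν * r - sBH ν rp rm) ^ 2 - (ν ^ 2 + 3) * (r - rp) * (r - rm) := by
  have hs : sBH ν rp rm ^ 2 = rp * rm * (ν ^ 2 + 3) := Real.sq_sqrt hp
  rw [R2]
  linear_combination -hs

lemma killing_sq_norm_eq (hp : 0 ≤ rp * rm * (ν ^ 2 + 3)) {r : ℝ} (hR : R2 ν rp rm r ≠ 0)
    (a b : ℝ) :
    -a ^ 2 * N2 ν rp rm r + R2 ν rp rm r * (a * Nθ ν rp rm r + b) ^ 2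
      = a ^ 2 + a * b * (2 * ν * r - sBH ν rp rm) + b ^ 2 * R2 ν rp rm r := by
  have hR2 := four_mul_R2_eq hp r
  rw [N2, Nθ]
  field_simp
  linear_combination (-4 * a ^ 2) * hR2

lemma eventually_R2_pos (hν : 1 < ν ^ 2) : ∀ᶠ r in atTop, 0 < R2 ν rp rm r := by
  filter_upwards [eventually_quadratic_pos (A := 3 * (ν ^ 2 - 1) / 4) (by linarith)
    (((ν ^ 2 + 3) * (rp + rm) - 4 * ν * sBH ν rp rm) / 4) 0] with r hr
  rw [R2]
  linarith

lemma eventually_killing_quadratic_pos (hν : 1 < ν ^ 2) {a b : ℝ} (hab : (a, b) ≠ (0, 0)) :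
    ∀ᶠ r in atTop, 0 < a ^ 2 + a * b * (2 * ν * r - sBH ν rp rm) + b ^ 2 * R2 ν rp rm r := by
  rcases eq_or_ne b 0 with rfl | hb
  · have ha : a ≠ 0 := by rintro rfl; exact hab rfl
    exact Eventually.of_forall fun r => by simpa using pow_two_pos_of_ne_zero ha
  · filter_upwards [eventually_quadratic_pos (A := b ^ 2 * (3 * (ν ^ 2 - 1) / 4))
      (mul_pos (pow_two_pos_of_ne_zero hb) (by linarith))
      (2 * a * b * ν + b ^ 2 * (((ν ^ 2 + 3) * (rp + rm) - 4 * ν * sBH ν rp rm) / 4))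
      (a ^ 2 - a * b * sBH ν rp rm)] with r hr
    rw [R2]
    linarith

end BlackHole

/-- for every (a,b) ≠ (0,0) there exists r > r₊ where the squared
norm −a²N²(r) + R²(r)(aN^θ(r) + b)² of a∂_t + b∂_θ is positive: no nonzero
linear combination of the Killing vectors is timelike throughout the exterior. -/
theorem stmt4 (ν rp rm : ℝ) (hν : 1 < ν) (hrm : 0 < rm) (hr : rm < rp)
    (a b : ℝ) (hab : (a, b) ≠ ((0 : ℝ), (0 : ℝ))) :
    ∃ r : ℝ, rp < r ∧
      0 < -a ^ 2 * N2 ν rp rm r + R2 ν rp rm r * (a * Nθ ν rp rm r + b) ^ 2 := by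
  have hp : 0 ≤ rp * rm * (ν ^ 2 + 3) := by have := hrm.trans hr; positivity
  have hν2 : 1 < ν ^ 2 := by nlinarith
  obtain ⟨r, hrp, hR, hpos⟩ := ((eventually_gt_atTop rp).and
    ((eventually_R2_pos hν2).and (eventually_killing_quadratic_pos hν2 hab))).exists
  exact ⟨r, hrp, by rwa [killing_sq_norm_eq hp hR.ne']⟩
end

section
/- Let I ⊆ ℝ be an open interval, let χ, η : I → ℝ be functions, let C be a nonzero real constant, and let φ¹, φ² : I → ℝ be twice differentiable functions satisfying, for all ξ ∈ I, the linear equation (φⁱ)''(ξ) − (χ²(ξ) + η²(ξ))·φⁱ(ξ) = 0 for i = 1,2, together with the Wronskian relation φ¹(ξ)(φ²)'(ξ) − φ²(ξ)(φ¹)'(ξ) = 1/C. Define 𝒢(ξ) := C·φ¹(ξ)·φ²(ξ). Then at every point ξ ∈ I where 𝒢(ξ) > 0, the function 𝒢^{1/2} satisfies the nonlinear equation (𝒢^{1/2})''(ξ) − (χ²(ξ) + η²(ξ))·𝒢^{1/2}(ξ) + 1/(4·𝒢^{3/2}(ξ)) = 0. -/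
/-!
For `y = √G` one has `y'' = (2 G G'' - G'²) / (4 y³)`. With `G = C φ₁ φ₂` and `q = χ² + η²`,
the equations `φᵢ'' = q φᵢ` give `2 G G'' = 4 q G² + 4 C² φ₁ φ₂ φ₁' φ₂'`, and
`G'² - 4 C² φ₁ φ₂ φ₁' φ₂' = (C (φ₁ φ₂' - φ₂ φ₁'))² = 1` by the Wronskian relation.
Hence `y'' = (4 q G² - 1) / (4 y³) = q y - 1 / (4 y³)` (the Ermakov–Pinney equation).
-/

open Filter Topology

theorem hasDerivAt_deriv_sqrt {G G' : ℝ → ℝ} {G'' ξ : ℝ}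
    (hG : ∀ᶠ x in 𝓝 ξ, HasDerivAt G (G' x) x) (hG' : HasDerivAt G' G'' ξ) (hpos : 0 < G ξ) :
    HasDerivAt (deriv fun x => √(G x))
      ((2 * G ξ * G'' - G' ξ ^ 2) / (4 * √(G ξ) ^ 3)) ξ := by
  have hpos_near : ∀ᶠ x in 𝓝 ξ, 0 < G x :=
    hG.self_of_nhds.continuousAt.eventually (lt_mem_nhds hpos)
  have hderiv : deriv (fun x => √(G x)) =ᶠ[𝓝 ξ] fun x => G' x / (2 * √(G x)) := by
    filter_upwards [hG, hpos_near] with x hx hx_pos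
    exact (hx.sqrt hx_pos.ne').deriv
  have hsqrt_pos : 0 < √(G ξ) := Real.sqrt_pos.mpr hpos
  have hquot := hG'.div ((hG.self_of_nhds.sqrt hpos.ne').const_mul 2) (by positivity)
  refine (hquot.congr_of_eventuallyEq hderiv).congr_deriv ?_
  field_simp
  rw [Real.sq_sqrt hpos.le]
  ring

theorem two_mul_mul_sub_sq_of_wronskian {C q φ₁ φ₂ φ₁' φ₂' φ₁'' φ₂'' : ℝ}
    (h₁ : φ₁'' = q * φ₁) (h₂ : φ₂'' = q * φ₂) (hW : C * (φ₁ * φ₂' - φ₂ * φ₁') = 1) :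
    2 * (C * φ₁ * φ₂) * (C * (φ₁'' * φ₂ + φ₁' * φ₂' + (φ₁' * φ₂' + φ₁ * φ₂'')))
      - (C * (φ₁' * φ₂ + φ₁ * φ₂')) ^ 2 = 4 * q * (C * φ₁ * φ₂) ^ 2 - 1 := by
  subst h₁ h₂
  linear_combination (-(C * (φ₁ * φ₂' - φ₂ * φ₁')) - 1) * hW

/-- if φ¹, φ² are twice differentiable solutions on an open
interval I of φ'' − (χ² + η²)φ = 0 with Wronskian φ¹(φ²)' − φ²(φ¹)' = 1/C, and
𝒢 := C·φ¹·φ², then wherever 𝒢 > 0 the function 𝒢^{1/2} satisfies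
(𝒢^{1/2})'' − (χ² + η²)𝒢^{1/2} + 1/(4𝒢^{3/2}) = 0. -/
theorem stmt9 (I : Set ℝ) (hI : ∃ a b : ℝ, I = Set.Ioo a b)
    (χ η : ℝ → ℝ) (C : ℝ) (hC : C ≠ 0)
    (φ₁ φ₂ φ₁' φ₂' φ₁'' φ₂'' : ℝ → ℝ)
    (hd₁ : ∀ ξ ∈ I, HasDerivAt φ₁ (φ₁' ξ) ξ)
    (hd₁' : ∀ ξ ∈ I, HasDerivAt φ₁' (φ₁'' ξ) ξ)
    (hd₂ : ∀ ξ ∈ I, HasDerivAt φ₂ (φ₂' ξ) ξ)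
    (hd₂' : ∀ ξ ∈ I, HasDerivAt φ₂' (φ₂'' ξ) ξ)
    (hode₁ : ∀ ξ ∈ I, φ₁'' ξ - (χ ξ ^ 2 + η ξ ^ 2) * φ₁ ξ = 0)
    (hode₂ : ∀ ξ ∈ I, φ₂'' ξ - (χ ξ ^ 2 + η ξ ^ 2) * φ₂ ξ = 0)
    (hwr : ∀ ξ ∈ I, φ₁ ξ * φ₂' ξ - φ₂ ξ * φ₁' ξ = 1 / C) :
    ∀ ξ ∈ I, 0 < C * φ₁ ξ * φ₂ ξ →
      deriv (deriv (fun x => Real.sqrt (C * φ₁ x * φ₂ x))) ξ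
          - (χ ξ ^ 2 + η ξ ^ 2) * Real.sqrt (C * φ₁ ξ * φ₂ ξ)
          + 1 / (4 * Real.sqrt (C * φ₁ ξ * φ₂ ξ) ^ 3) = 0 := by
  intro ξ hξ hG
  obtain ⟨a, b, rfl⟩ := hI
  have hGderiv : ∀ x ∈ Set.Ioo a b, HasDerivAt (fun x => C * φ₁ x * φ₂ x)
      (C * (φ₁' x * φ₂ x + φ₁ x * φ₂' x)) x := fun x hx => by
    simpa only [mul_assoc, Pi.mul_apply] using ((hd₁ x hx).mul (hd₂ x hx)).const_mul C
  have hG'deriv : HasDerivAt (fun x => C * (φ₁' x * φ₂ x + φ₁ x * φ₂' x))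
      (C * (φ₁'' ξ * φ₂ ξ + φ₁' ξ * φ₂' ξ + (φ₁' ξ * φ₂' ξ + φ₁ ξ * φ₂'' ξ))) ξ :=
    (((hd₁' ξ hξ).mul (hd₂ ξ hξ)).add ((hd₁ ξ hξ).mul (hd₂' ξ hξ))).const_mul C
  have hGderiv_near := eventually_of_mem (isOpen_Ioo.mem_nhds hξ) hGderiv
  rw [(hasDerivAt_deriv_sqrt hGderiv_near hG'deriv hG).deriv,
    two_mul_mul_sub_sq_of_wronskian (sub_eq_zero.mp (hode₁ ξ hξ)) (sub_eq_zero.mp (hode₂ ξ hξ))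
      (by rw [hwr ξ hξ, mul_one_div_cancel hC])]
  have hsqrt_pos := Real.sqrt_pos.mpr hG
  have hsq := Real.sq_sqrt hG.le
  field_simp
  linear_combination (-4 * (χ ξ ^ 2 + η ξ ^ 2) * (√(C * φ₁ ξ * φ₂ ξ) ^ 2 + C * φ₁ ξ * φ₂ ξ)) * hsq
end

section
/- Let A > 0 and B > 0 be real numbers, and for each nonzero integer k define S_k := Σ_{n ∈ ℤ} (A n² + B k²)^{−3/2}. Then k²·S_k → 2/(B√A) as k → +∞. -/
open Filter Topology

/-!
Put `c = B k²` and `f x = (A x² + c) ^ (-3/2)`. An antiderivative of `f` is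
`x (A x² + c) ^ (-1/2) / c`, so `∫₀^∞ f = 1 / (c √A)`. Since `f` is even and decreasing on
`[0, ∞)`, the integral test pins `∑_{n ∈ ℤ} f n` to within `f 0 = c ^ (-3/2)` of
`2 ∫₀^∞ f`.
Multiplying by `k²` gives `|k² S_k - 2 / (B √A)| ≤ B ^ (-3/2) / k`.
-/

open Set MeasureTheory

theorem Function.Even.abs_tsum_int_sub_two_mul_integral_Ioi_le {f : ℝ → ℝ} (even : f.Even)
    (anti : AntitoneOn f (Ici 0)) (integrable : IntegrableOn f (Ioi 0))
    (nonneg : ∀ t ∈ Ioi 0, 0 ≤ f t) :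
    |∑' n : ℤ, f n - 2 * ∫ x in Ioi 0, f x| ≤ f 0 := by
  have summable := anti.summable_of_integrableOn_Ioi_zero integrable nonneg
  have sum_int : ∑' n : ℤ, f n = 2 * ∑' n : ℕ, f n - f 0 := by
    refine (HasSum.of_nat_of_neg summable.hasSum ?_).tsum_eq.trans (by push_cast; ring)
    simpa only [Int.cast_neg, Int.cast_natCast, even _] using summable.hasSum
  have lower := anti.integral_le_tsum summable nonneg
  have upper := anti.tsum_le_integral integrable nonneg
  rw [sum_int, abs_le]
  constructor <;> linarith

section

variable {A c : ℝ}

theorem hasDerivAt_mul_rpow_neg_one_half_div (hA : 0 ≤ A) (hc : 0 < c) (x : ℝ) :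
    HasDerivAt (fun x : ℝ => x * (A * x ^ 2 + c) ^ (-(1 : ℝ) / 2) / c)
      ((A * x ^ 2 + c) ^ (-(3 : ℝ) / 2)) x := by
  have hpos : 0 < A * x ^ 2 + c := by positivity
  have inner : HasDerivAt (fun x : ℝ => A * x ^ 2 + c) (A * (2 * x)) x := by
    simpa using ((hasDerivAt_pow 2 x).const_mul A).add_const c
  refine ((hasDerivAt_id x).mul
    (inner.rpow_const (p := -(1 : ℝ) / 2) (Or.inl hpos.ne'))).div_const c |>.congr_deriv ?_
  have split : (A * x ^ 2 + c) ^ (-(1 : ℝ) / 2) =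
      (A * x ^ 2 + c) * (A * x ^ 2 + c) ^ (-(3 : ℝ) / 2) := by
    conv_rhs => enter [1]; rw [← Real.rpow_one (A * x ^ 2 + c)]
    rw [← Real.rpow_add hpos]; norm_num
  rw [show -(1 : ℝ) / 2 - 1 = -(3 : ℝ) / 2 by norm_num, split]
  field_simp
  simp only [id]
  ring

theorem tendsto_mul_rpow_neg_one_half_div (hA : 0 < A) (hc : 0 < c) :
    Tendsto (fun x : ℝ => x * (A * x ^ 2 + c) ^ (-(1 : ℝ) / 2) / c) atTop
      (𝓝 (1 / (c * Real.sqrt A))) := by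
  have inner : Tendsto (fun x : ℝ => A + c / x ^ 2) atTop (𝓝 A) := by
    have : Tendsto (fun x : ℝ => c / x ^ 2) atTop (𝓝 0) :=
      tendsto_const_nhds.div_atTop (tendsto_pow_atTop two_ne_zero)
    simpa using this.const_add A
  have limit := (((Real.continuousAt_rpow_const A (-(1 : ℝ) / 2) (Or.inl hA.ne')).tendsto).comp
    inner).div_const c
  rw [show A ^ (-(1 : ℝ) / 2) / c = 1 / (c * Real.sqrt A) by
    rw [Real.sqrt_eq_rpow, show -(1 : ℝ) / 2 = -(1 / 2) by norm_num, Real.rpow_neg hA.le]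
    field_simp] at limit
  refine limit.congr' ?_
  filter_upwards [eventually_gt_atTop (0 : ℝ)] with x hx
  have sq_rpow : (x ^ 2) ^ (-(1 : ℝ) / 2) = x⁻¹ := by
    rw [← Real.rpow_natCast, ← Real.rpow_mul hx.le]; norm_num [Real.rpow_neg_one]
  have : A + c / x ^ 2 = (A * x ^ 2 + c) / x ^ 2 := by field_simp
  rw [Function.comp_apply, this, Real.div_rpow (by positivity) (sq_nonneg x), sq_rpow]
  field_simp

theorem integrableOn_rpow_neg_three_halves (hA : 0 < A) (hc : 0 < c) :
    IntegrableOn (fun x : ℝ => (A * x ^ 2 + c) ^ (-(3 : ℝ) / 2)) (Ioi 0) :=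
  integrableOn_Ioi_deriv_of_nonneg' (fun x _ => hasDerivAt_mul_rpow_neg_one_half_div hA.le hc x)
    (fun x _ => by positivity) (tendsto_mul_rpow_neg_one_half_div hA hc)

theorem integral_Ioi_rpow_neg_three_halves (hA : 0 < A) (hc : 0 < c) :
    ∫ x in Ioi 0, (A * x ^ 2 + c) ^ (-(3 : ℝ) / 2) = 1 / (c * Real.sqrt A) := by
  simpa using integral_Ioi_of_hasDerivAt_of_nonneg' (a := 0)
    (fun x _ => hasDerivAt_mul_rpow_neg_one_half_div hA.le hc x)
    (fun x _ => by positivity) (tendsto_mul_rpow_neg_one_half_div hA hc)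

theorem antitoneOn_rpow_neg_three_halves (hA : 0 ≤ A) (hc : 0 < c) :
    AntitoneOn (fun x : ℝ => (A * x ^ 2 + c) ^ (-(3 : ℝ) / 2)) (Ici 0) := by
  intro x hx y _ hxy
  have : x ^ 2 ≤ y ^ 2 := pow_le_pow_left₀ hx hxy 2
  exact Real.rpow_le_rpow_of_nonpos (by positivity) (by nlinarith) (by norm_num)

theorem abs_tsum_int_rpow_neg_three_halves_sub_le (hA : 0 < A) (hc : 0 < c) :
    |∑' n : ℤ, (A * (n : ℝ) ^ 2 + c) ^ (-(3 : ℝ) / 2) - 2 / (c * Real.sqrt A)|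
      ≤ c ^ (-(3 : ℝ) / 2) := by
  have even : Function.Even fun x : ℝ => (A * x ^ 2 + c) ^ (-(3 : ℝ) / 2) := fun x => by
    simp only [even_two, Even.neg_pow]
  rw [div_eq_mul_one_div 2, ← integral_Ioi_rpow_neg_three_halves hA hc]
  have bound := even.abs_tsum_int_sub_two_mul_integral_Ioi_le
    (antitoneOn_rpow_neg_three_halves hA.le hc) (integrableOn_rpow_neg_three_halves hA hc)
    (fun _ _ => by positivity)
  simp only [zero_pow two_ne_zero, mul_zero, zero_add] at bound
  exact_mod_cast bound

end

theorem sq_mul_rpow_neg_three_halves_mul_sq {B t : ℝ} (hB : 0 ≤ B) (ht : 0 < t) :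
    t ^ 2 * (B * t ^ 2) ^ (-(3 : ℝ) / 2) = B ^ (-(3 : ℝ) / 2) / t := by
  have : (t ^ 2) ^ (-(3 : ℝ) / 2) = (t ^ 3)⁻¹ := by
    rw [← Real.rpow_natCast t 2, ← Real.rpow_mul ht.le, ← Real.rpow_natCast t 3,
      ← Real.rpow_neg ht.le]
    norm_num
  rw [Real.mul_rpow hB (sq_nonneg t), this]
  field_simp

/-- for A, B > 0, with S_k := Σ_{n ∈ ℤ} (An² + Bk²)^{−3/2}, one
has k²·S_k → 2/(B√A) as k → +∞. -/
theorem stmt11 (A B : ℝ) (hA : 0 < A) (hB : 0 < B) :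
    Tendsto (fun k : ℤ =>
        (k : ℝ) ^ 2 * ∑' n : ℤ, (A * (n : ℝ) ^ 2 + B * (k : ℝ) ^ 2) ^ (-(3 : ℝ) / 2))
      atTop (𝓝 (2 / (B * Real.sqrt A))) := by
  have error_lim : Tendsto (fun k : ℤ => B ^ (-(3 : ℝ) / 2) / k) atTop (𝓝 0) :=
    tendsto_const_nhds.div_atTop tendsto_intCast_atTop_atTop
  refine tendsto_iff_norm_sub_tendsto_zero.2 (squeeze_zero_norm' ?_ error_lim)
  filter_upwards [eventually_gt_atTop 0] with k hk
  have hk : (0 : ℝ) < k := Int.cast_pos.2 hk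
  have hc : 0 < B * (k : ℝ) ^ 2 := by positivity
  set S := ∑' n : ℤ, (A * (n : ℝ) ^ 2 + B * (k : ℝ) ^ 2) ^ (-(3 : ℝ) / 2)
  calc ‖‖(k : ℝ) ^ 2 * S - 2 / (B * Real.sqrt A)‖‖
      = |(k : ℝ) ^ 2 * (S - 2 / (B * (k : ℝ) ^ 2 * Real.sqrt A))| := by
        rw [norm_norm, Real.norm_eq_abs]
        congr 1
        field_simp
    _ = (k : ℝ) ^ 2 * |S - 2 / (B * (k : ℝ) ^ 2 * Real.sqrt A)| := by
        rw [abs_mul, abs_of_pos (pow_pos hk 2)]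
    _ ≤ (k : ℝ) ^ 2 * (B * (k : ℝ) ^ 2) ^ (-(3 : ℝ) / 2) :=
        mul_le_mul_of_nonneg_left (abs_tsum_int_rpow_neg_three_halves_sub_le hA hc) (sq_nonneg _)
    _ = B ^ (-(3 : ℝ) / 2) / k := sq_mul_rpow_neg_three_halves_mul_sq hB.le hk
end

section
/- Let R > 0, κ ≠ 0, Ω and N be real numbers with N² > R²Ω². Then the double series Σ'_{(n,k)} |R²(κn + iΩk)² + N²k²|^{−3/2}, where the sum runs over all pairs of integers (n,k) ∈ ℤ × ℤ excluding (n,k) = (0,0) and |·| denotes the complex absolute value, converges (the indexed family is summable). -/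
/-!
Expanding the square, the real part of `R²(κn + iΩk)² + N²k²` is the quadratic form
`R²κ²n² + (N² - R²Ω²)k²`, positive definite because `κ ≠ 0` and `N² > R²Ω²`. Hence the modulus
is at least `c ‖(n,k)‖²` for some `c > 0`, so the terms are `O(‖(n,k)‖⁻³)`, and `∑ ‖q‖⁻ˢ`
converges over `ℤ²` for `s > 2`.
-/

open Complex

lemma norm_finTwoArrowEquiv_symm (q : ℤ × ℤ) : ‖(finTwoArrowEquiv ℤ).symm q‖ = ‖q‖ := by
  simp [EisensteinSeries.norm_eq_max_natAbs, Prod.norm_def, Int.norm_eq_abs, Nat.cast_natAbs]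

lemma summable_norm_intProd_rpow {s : ℝ} (hs : 2 < s) :
    Summable fun q : ℤ × ℤ => ‖q‖ ^ (-s) :=
  ((finTwoArrowEquiv ℤ).symm.summable_iff.mpr
    (EisensteinSeries.summable_one_div_norm_rpow hs)).congr fun q => by
      rw [Function.comp_apply, norm_finTwoArrowEquiv_symm]

lemma sq_norm_intProd_le (q : ℤ × ℤ) : ‖q‖ ^ 2 ≤ (q.1 : ℝ) ^ 2 + (q.2 : ℝ) ^ 2 := by
  rw [Prod.norm_def, Int.norm_eq_abs, Int.norm_eq_abs]
  rcases max_cases |(q.1 : ℝ)| |(q.2 : ℝ)| with ⟨h, _⟩ | ⟨h, _⟩ <;>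
    rw [h, sq_abs] <;> nlinarith [sq_nonneg (q.1 : ℝ), sq_nonneg (q.2 : ℝ)]

lemma min_mul_sq_norm_le {a b : ℝ} (ha : 0 ≤ a) (hb : 0 ≤ b) (q : ℤ × ℤ) :
    min a b * ‖q‖ ^ 2 ≤ a * (q.1 : ℝ) ^ 2 + b * (q.2 : ℝ) ^ 2 :=
  calc min a b * ‖q‖ ^ 2
      ≤ min a b * ((q.1 : ℝ) ^ 2 + (q.2 : ℝ) ^ 2) :=
        mul_le_mul_of_nonneg_left (sq_norm_intProd_le q) (le_min ha hb)
    _ ≤ a * (q.1 : ℝ) ^ 2 + b * (q.2 : ℝ) ^ 2 := by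
        nlinarith [min_le_left a b, min_le_right a b, sq_nonneg (q.1 : ℝ), sq_nonneg (q.2 : ℝ)]

lemma summable_rpow_neg_of_mul_sq_norm_le {f : ℤ × ℤ → ℝ} {c s : ℝ} (hc : 0 < c) (hs : 1 < s)
    (hf : ∀ q ≠ 0, c * ‖q‖ ^ 2 ≤ f q) :
    Summable fun q : {q : ℤ × ℤ // q ≠ 0} => f q ^ (-s) := by
  have hmajorant := ((summable_norm_intProd_rpow (s := 2 * s) (by linarith)).subtype
    {q | q ≠ 0}).mul_left (c ^ (-s))
  refine hmajorant.of_nonneg_of_le (fun q => ?_) fun ⟨q, hq0⟩ => ?_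
  · exact Real.rpow_nonneg ((by positivity : 0 ≤ c * ‖(q : ℤ × ℤ)‖ ^ 2).trans (hf q q.2)) _
  · have hq : 0 < ‖q‖ := norm_pos_iff.mpr hq0
    calc f q ^ (-s) ≤ (c * ‖q‖ ^ 2) ^ (-s) :=
          Real.rpow_le_rpow_of_nonpos (by positivity) (hf q hq0) (by linarith)
      _ = c ^ (-s) * ‖q‖ ^ (-(2 * s)) := by
          rw [Real.mul_rpow hc.le (by positivity), ← Real.rpow_natCast, ← Real.rpow_mul hq.le]
          norm_num

lemma re_mul_sq_add_mul_sq (R κ Ω N x y : ℝ) :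
    ((R : ℂ) ^ 2 * ((κ : ℂ) * x + I * Ω * y) ^ 2 + (N : ℂ) ^ 2 * y ^ 2).re
      = R ^ 2 * κ ^ 2 * x ^ 2 + (N ^ 2 - R ^ 2 * Ω ^ 2) * y ^ 2 := by
  simp only [pow_two, add_re, mul_re, mul_im, add_im, ofReal_re, ofReal_im, I_re, I_im,
    mul_zero, sub_zero, zero_mul, sub_self, one_mul, zero_add, add_zero]
  ring

/-- for R > 0, κ ≠ 0, N² > R²Ω², the family
(n,k) ↦ |R²(κn + iΩk)² + N²k²|^{−3/2}, indexed by pairs of integers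
(n,k) ≠ (0,0), is summable. -/
theorem stmt15 (R κ Ω N : ℝ) (hR : 0 < R) (hκ : κ ≠ 0) (hN : R ^ 2 * Ω ^ 2 < N ^ 2) :
    Summable (fun p : {q : ℤ × ℤ // q ≠ 0} =>
      (‖(R : ℂ) ^ 2
          * ((κ : ℂ) * (((p : ℤ × ℤ).1 : ℤ) : ℂ)
            + Complex.I * (Ω : ℂ) * (((p : ℤ × ℤ).2 : ℤ) : ℂ)) ^ 2
          + (N : ℂ) ^ 2 * (((p : ℤ × ℤ).2 : ℤ) : ℂ) ^ 2‖) ^ (-(3 : ℝ) / 2)) := by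
  have ha : 0 < R ^ 2 * κ ^ 2 := by positivity
  have hb : 0 < N ^ 2 - R ^ 2 * Ω ^ 2 := by linarith
  have hbound (q : ℤ × ℤ) :
      min (R ^ 2 * κ ^ 2) (N ^ 2 - R ^ 2 * Ω ^ 2) * ‖q‖ ^ 2 ≤
        ‖(R : ℂ) ^ 2 * ((κ : ℂ) * (q.1 : ℂ) + I * Ω * (q.2 : ℂ)) ^ 2
          + (N : ℂ) ^ 2 * (q.2 : ℂ) ^ 2‖ := by
    have hre := re_mul_sq_add_mul_sq R κ Ω N q.1 q.2
    push_cast at hre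
    exact (min_mul_sq_norm_le ha.le hb.le q).trans (hre.symm.trans_le (re_le_norm _))
  rw [neg_div]
  exact summable_rpow_neg_of_mul_sq_norm_le (s := 3 / 2) (f := fun q : ℤ × ℤ =>
      ‖(R : ℂ) ^ 2 * ((κ : ℂ) * (q.1 : ℂ) + I * Ω * (q.2 : ℂ)) ^ 2 + (N : ℂ) ^ 2 * (q.2 : ℂ) ^ 2‖)
    (lt_min ha hb) (by norm_num) fun q _ => hbound q
end
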